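/- arXiv:2604.12550 — 3 statements merged into one kernel-verified Lean document; each statement's English description precedes it below -/
import Mathlib

section
/- Let Q be a finite quandle, ρ : Q → GL(V) an irreducible representation of Q over ℂ, and ρ_{G(Q)} : G(Q) → GL(V) the induced group representation. If g, h ∈ G(Q) satisfy θ_{G(Q)}(g) = θ_{G(Q)}(h), then there exists c ∈ ℂˣ with ρ_{G(Q)}(g) = c · ρ_{G(Q)}(h). -/
/-!
Put `z = g * h⁻¹`. As `θ(z) = 1`, `z` acts trivially on `Q`, so it commutes with the generators
of `G(Q)` and is central; hence `ρ_G(z)` commutes with every `ρ(x)`. It is then a scalar by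
Dixmier's form of Schur's lemma: an irreducible family of countably many operators lives on a
space of countable dimension, and on such a space over an uncountable algebraically closed field
every operator `T` has a scalar `c` with `T - c` not invertible. Otherwise every nonzero
polynomial in `T` would be invertible, evaluation at `T` would extend to the field `K(X)`, and
applied to a vector `v ≠ 0` it would embed `K(X)`, in which the `(X - c)⁻¹` are independent,
into `V`. Schur's lemma proper then forces `T - c = 0`.
-/

open scoped Quandles
/-- The inner automorphism group of a rack/quandle `Q`: the subgroup of permutations
of `Q` generated by the left translations `L_x = Rack.act' x`. -/
def QdlInn (Q : Type*) [Rack Q] : Subgroup (Equiv.Perm Q) :=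
  Subgroup.closure (Set.range (Rack.act' (R := Q)))

/-- The quandle morphism `θ : Q → Conj (Inn Q)`, `x ↦ L_x`. -/
def QdlTheta (Q : Type*) [Rack Q] : ShelfHom Q (Quandle.Conj (QdlInn Q)) where
  toFun x := ⟨Rack.act' x, Subgroup.subset_closure ⟨x, rfl⟩⟩
  map_act' := by
    intro x y
    simp only [Quandle.conj_act_eq_conj]
    exact Subtype.ext (Rack.ad_conj x y)

/-- The induced group morphism `θ_{G(Q)} : G(Q) → Inn(Q)`. -/
def QdlThetaG (Q : Type*) [Rack Q] : Rack.EnvelGroup Q →* QdlInn Q :=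
  Rack.toEnvelGroup.map (QdlTheta Q)

/-- `Z₀`, the kernel of `θ_{G(Q)}`. -/
def QdlZ0 (Q : Type*) [Rack Q] : Subgroup (Rack.EnvelGroup Q) :=
  (QdlThetaG Q).ker

section Reps

variable {Q : Type*} {V : Type*} [AddCommGroup V] [Module ℂ V]

/-- `ρ : Q → GL(V)` is a quandle (rack) representation: `ρ(x ◃ y) = ρ(x) ρ(y) ρ(x)⁻¹`. -/
def IsQdlRep [Shelf Q] (ρ : Q → (V →ₗ[ℂ] V)ˣ) : Prop :=
  ∀ x y : Q, ρ (x ◃ y) = ρ x * ρ y * (ρ x)⁻¹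

/-- A family `ρ : Q → GL(V)` is irreducible if the only subspaces invariant
under all `ρ x` are `0` and `V`. -/
def QdlIrred (ρ : Q → (V →ₗ[ℂ] V)ˣ) : Prop :=
  ∀ W : Submodule ℂ V, (∀ x : Q, ∀ v ∈ W, (ρ x : V →ₗ[ℂ] V) v ∈ W) → W = ⊥ ∨ W = ⊤

/-- A group representation `σ : G →* GL(V)` is irreducible if the only subspaces
invariant under all `σ g` are `0` and `V`. -/
def GrpIrred {G : Type*} [Group G] (σ : G →* (V →ₗ[ℂ] V)ˣ) : Prop :=
  ∀ W : Submodule ℂ V, (∀ g : G, ∀ v ∈ W, (σ g : V →ₗ[ℂ] V) v ∈ W) → W = ⊥ ∨ W = ⊤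

end Reps

/-- A character of a quandle: a map `χ : Q → ℂˣ` with `χ(x ◃ y) = χ(y)`. -/
def QdlChar {Q : Type*} [Shelf Q] (χ : Q → ℂˣ) : Prop :=
  ∀ x y : Q, χ (x ◃ y) = χ y

section

open Polynomial Cardinal

namespace Rack

variable {R : Type*} [Rack R]

theorem closure_range_toEnvelGroup : Subgroup.closure (Set.range (toEnvelGroup R)) = ⊤ := by
  refine eq_top_iff.2 fun g _ => Quotient.inductionOn g fun e => ?_
  induction e with
  | unit => exact Subgroup.one_mem _
  | incl x => exact Subgroup.subset_closure ⟨x, rfl⟩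
  | mul a b iha ihb => exact Subgroup.mul_mem _ iha ihb
  | inv a ih => exact Subgroup.inv_mem _ ih

theorem mul_toEnvelGroup_mul_inv (g : EnvelGroup R) (y : R) :
    g * toEnvelGroup R y * g⁻¹ = toEnvelGroup R (envelAction g y) := by
  have hg : g ∈ Subgroup.closure (Set.range (toEnvelGroup R)) := by
    rw [closure_range_toEnvelGroup]; exact Subgroup.mem_top g
  induction hg using Subgroup.closure_induction generalizing y with
  | mem _ hx =>
    obtain ⟨x, rfl⟩ := hx
    exact ((toEnvelGroup R).map_act' (x := x) (y := y)).symm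
  | one => simp
  | mul a b _ _ iha ihb =>
    rw [map_mul, Equiv.Perm.mul_apply, ← iha, ← ihb]
    group
  | inv a _ ih =>
    have h := ih ((envelAction a)⁻¹ y)
    rw [← Equiv.Perm.mul_apply, mul_inv_cancel, Equiv.Perm.one_apply] at h
    rw [map_inv, ← h]
    group

end Rack

theorem QdlThetaG_eq_envelAction (Q : Type*) [Rack Q] :
    (QdlInn Q).subtype.comp (QdlThetaG Q) = Rack.envelAction :=
  MonoidHom.eq_of_eqOn_dense Rack.closure_range_toEnvelGroup fun _ ⟨_, hx⟩ => hx ▸ rfl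

theorem QdlZ0_le_center (Q : Type*) [Rack Q] :
    QdlZ0 Q ≤ Subgroup.center (Rack.EnvelGroup Q) := by
  intro z hz
  rw [← Subgroup.centralizer_univ, ← Subgroup.coe_top, ← Rack.closure_range_toEnvelGroup,
    Subgroup.centralizer_closure, Subgroup.mem_centralizer_iff]
  rintro _ ⟨y, rfl⟩
  have hact : Rack.envelAction z = 1 := by
    rw [← QdlThetaG_eq_envelAction, MonoidHom.comp_apply, MonoidHom.mem_ker.1 hz, map_one]
  have hconj := Rack.mul_toEnvelGroup_mul_inv z y
  rw [hact, Equiv.Perm.one_apply, mul_inv_eq_iff_eq_mul] at hconj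
  exact hconj.symm

section Spectrum

variable {K A : Type*} [Field K] [Ring A] [Algebra K A]

theorem isUnit_aeval_of_spectrum_eq_empty [IsAlgClosed K] {a : A} (ha : spectrum K a = ∅)
    {p : K[X]} (hp : p ≠ 0) : IsUnit (aeval a p) := by
  rcases le_or_gt p.degree 0 with hdeg | hdeg
  · rw [eq_C_of_degree_le_zero hdeg, aeval_C]
    exact (isUnit_iff_ne_zero.2 fun h => hp (by rw [eq_C_of_degree_le_zero hdeg, h, C_0])).map _
  · rw [← spectrum.zero_notMem_iff K, spectrum.map_polynomial_aeval_of_degree_pos a p hdeg, ha,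
      Set.image_empty]
    exact Set.notMem_empty 0

noncomputable def aevalFractionRing (a : A) (ha : ∀ p : K[X], p ≠ 0 → IsUnit (aeval a p)) :
    FractionRing K[X] →ₐ[K] A where
  __ := OreLocalization.universalHom (aeval a).toRingHom
      (IsUnit.liftRight ((aeval a).toRingHom.toMonoidHom.comp (nonZeroDivisors K[X]).subtype)
        fun p => ha p (nonZeroDivisors.coe_ne_zero p))
      fun _ => rfl
  commutes' c := (OreLocalization.universalHom_commutes (S := nonZeroDivisors K[X]) _ _ _).trans
    (aeval_C a c)

theorem Module.End.spectrum_nonempty_of_rank_le_aleph0 {V : Type*} [AddCommGroup V]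
    [Module K V] [Nontrivial V] [IsAlgClosed K] (hK : ℵ₀ < #K) (hV : Module.rank K V ≤ ℵ₀)
    (T : Module.End K V) : (spectrum K T).Nonempty := by
  by_contra hT
  obtain ⟨v, hv⟩ := exists_ne (0 : V)
  let φ := aevalFractionRing T fun _ => isUnit_aeval_of_spectrum_eq_empty
    (Set.not_nonempty_iff_eq_empty.1 hT)
  let Φ : FractionRing K[X] →ₗ[K] V := LinearMap.applyₗ v ∘ₗ φ.toLinearMap
  have hΦ : LinearMap.ker Φ = ⊥ := by
    refine LinearMap.ker_eq_bot'.2 fun r hr => by_contra fun hr0 => hv ?_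
    exact ((Module.End.isUnit_iff _).1 ((isUnit_iff_ne_zero.2 hr0).map φ)).1
      (hr.trans (map_zero _).symm)
  have hX : Transcendental K (algebraMap K[X] (FractionRing K[X]) X) :=
    (transcendental_algebraMap_iff (IsFractionRing.injective _ _)).2 (transcendental_X K)
  exact ((hX.linearIndependent_sub_inv.map' Φ hΦ).cardinal_lift_le_rank.trans
    (lift_le_aleph0.2 hV)).not_gt (aleph0_lt_lift.2 hK)

end Spectrum

def IsIrreducibleFamily {R V ι : Type*} [Ring R] [AddCommGroup V] [Module R V]
    (ρ : ι → Module.End R V) : Prop :=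
  ∀ W : Submodule R V, (∀ i, ∀ v ∈ W, ρ i v ∈ W) → W = ⊥ ∨ W = ⊤

namespace IsIrreducibleFamily

theorem eq_zero_or_isUnit_of_commute {R V ι : Type*} [Ring R] [AddCommGroup V] [Module R V]
    {ρ : ι → Module.End R V} (hρ : IsIrreducibleFamily ρ) {T : Module.End R V}
    (hT : ∀ i, Commute T (ρ i)) : T = 0 ∨ IsUnit T := by
  have hker := hρ (LinearMap.ker T) fun i v hv => by
    rw [LinearMap.mem_ker] at hv ⊢
    rw [← Module.End.mul_apply, (hT i).eq, Module.End.mul_apply, hv, map_zero]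
  have hrange := hρ (LinearMap.range T) fun i _ ⟨u, hu⟩ =>
    ⟨ρ i u, by rw [← hu, ← Module.End.mul_apply, (hT i).eq, Module.End.mul_apply]⟩
  rcases hrange with hrange | hrange
  · exact Or.inl (LinearMap.range_eq_bot.1 hrange)
  rcases hker with hker | hker
  · exact Or.inr ((Module.End.isUnit_iff T).2
      ⟨LinearMap.ker_eq_bot.1 hker, LinearMap.range_eq_top.1 hrange⟩)
  · exact Or.inl (LinearMap.ker_eq_top.1 hker)

variable {K V ι : Type*} [Field K] [AddCommGroup V] [Module K V] {ρ : ι → Module.End K V}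

theorem rank_le_aleph0 [Countable ι] (hρ : IsIrreducibleFamily ρ) : Module.rank K V ≤ ℵ₀ := by
  rcases subsingleton_or_nontrivial V with _ | _
  · simp
  obtain ⟨v, hv⟩ := exists_ne (0 : V)
  set S := Set.range fun w : FreeMonoid ι => FreeMonoid.lift ρ w v
  have hvS : v ∈ Submodule.span K S := Submodule.subset_span ⟨1, by simp⟩
  have hS : Submodule.span K S = ⊤ := by
    refine (hρ _ fun i u hu => ?_).resolve_left fun h => hv ((Submodule.mem_bot K).1 (h ▸ hvS))
    refine Submodule.span_mono ?_ (Submodule.map_span (ρ i) S ▸ Submodule.mem_map_of_mem hu)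
    rintro _ ⟨_, ⟨w, rfl⟩, rfl⟩
    exact ⟨FreeMonoid.of i * w, by simp⟩
  calc Module.rank K V = Module.rank K (⊤ : Submodule K V) := (rank_top K V).symm
    _ = Module.rank K (Submodule.span K S) := by rw [hS]
    _ ≤ #S := rank_span_le S
    _ ≤ ℵ₀ := mk_le_aleph0_iff.2 (Set.countable_range _).to_subtype

theorem exists_eq_algebraMap_of_commute [IsAlgClosed K] (hK : ℵ₀ < #K) [Countable ι]
    (hρ : IsIrreducibleFamily ρ) {T : Module.End K V} (hT : ∀ i, Commute T (ρ i)) :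
    ∃ c : K, T = algebraMap K (Module.End K V) c := by
  rcases subsingleton_or_nontrivial V with _ | _
  · exact ⟨0, Subsingleton.elim _ _⟩
  obtain ⟨c, hc⟩ := Module.End.spectrum_nonempty_of_rank_le_aleph0 hK hρ.rank_le_aleph0 T
  refine ⟨c, ?_⟩
  have hcomm : ∀ i, Commute (algebraMap K (Module.End K V) c - T) (ρ i) :=
    fun i => (Algebra.commute_algebraMap_left c (ρ i)).sub_left (hT i)
  exact (sub_eq_zero.1 ((hρ.eq_zero_or_isUnit_of_commute hcomm).resolve_right hc)).symm

theorem exists_units_eq_smul_one_of_commute [IsAlgClosed K] (hK : ℵ₀ < #K) [Countable ι]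
    (hρ : IsIrreducibleFamily ρ) (T : (Module.End K V)ˣ)
    (hT : ∀ i, Commute (T : Module.End K V) (ρ i)) :
    ∃ c : Kˣ, (T : Module.End K V) = (c : K) • 1 := by
  rcases subsingleton_or_nontrivial V with _ | _
  · exact ⟨1, Subsingleton.elim _ _⟩
  obtain ⟨c, hc⟩ := hρ.exists_eq_algebraMap_of_commute hK hT
  have hc0 : c ≠ 0 := by
    rintro rfl
    exact T.ne_zero (hc.trans (map_zero _))
  exact ⟨Units.mk0 c hc0, hc.trans (Algebra.algebraMap_eq_smul_one c)⟩

end IsIrreducibleFamily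

end

theorem stmt7_general (Q : Type*) [Quandle Q] [Finite Q] (V : Type*) [AddCommGroup V] [Module ℂ V]
    (ρ : Q → (V →ₗ[ℂ] V)ˣ) (hirr : QdlIrred ρ)
    (ρG : Rack.EnvelGroup Q →* (V →ₗ[ℂ] V)ˣ)
    (hcomp : ∀ x : Q, ρG (Rack.toEnvelGroup Q x) = ρ x)
    (g h : Rack.EnvelGroup Q) (hgh : QdlThetaG Q g = QdlThetaG Q h) :
    ∃ c : ℂˣ, (ρG g : V →ₗ[ℂ] V) = (c : ℂ) • (ρG h : V →ₗ[ℂ] V) := by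
  have hz : g * h⁻¹ ∈ Subgroup.center (Rack.EnvelGroup Q) :=
    QdlZ0_le_center Q (by rw [QdlZ0, MonoidHom.mem_ker, map_mul, map_inv, hgh, mul_inv_cancel])
  have hcomm : ∀ x, Commute (ρG (g * h⁻¹) : V →ₗ[ℂ] V) (ρ x) := fun x => by
    rw [← hcomp x]
    exact (Commute.map (Subgroup.mem_center_iff.1 hz _).symm ρG).units_val
  have hℂ : Cardinal.aleph0 < Cardinal.mk ℂ :=
    Cardinal.mk_complex ▸ Cardinal.aleph0_lt_continuum
  obtain ⟨c, hc⟩ := IsIrreducibleFamily.exists_units_eq_smul_one_of_commute hℂ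
    (ρ := fun x => (ρ x : V →ₗ[ℂ] V)) hirr (ρG (g * h⁻¹)) hcomm
  refine ⟨c, ?_⟩
  calc (ρG g : V →ₗ[ℂ] V) = ρG (g * h⁻¹) * ρG h := by
        rw [← Units.val_mul, ← map_mul, inv_mul_cancel_right]
    _ = (c : ℂ) • (ρG h : V →ₗ[ℂ] V) := by rw [hc, smul_mul_assoc, one_mul]

/-- for an irreducible representation `ρ` of a finite quandle `Q`, two elements
of `G(Q)` with the same image in `Inn(Q)` act by proportional operators. -/
theorem stmt7 (Q : Type*) [Quandle Q] [Finite Q] (V : Type*) [AddCommGroup V] [Module ℂ V]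
    (ρ : Q → (V →ₗ[ℂ] V)ˣ) (hρ : IsQdlRep ρ) (hirr : QdlIrred ρ)
    (ρG : Rack.EnvelGroup Q →* (V →ₗ[ℂ] V)ˣ)
    (hcomp : ∀ x : Q, ρG (Rack.toEnvelGroup Q x) = ρ x)
    (g h : Rack.EnvelGroup Q) (hgh : QdlThetaG Q g = QdlThetaG Q h) :
    ∃ c : ℂˣ, (ρG g : V →ₗ[ℂ] V) = (c : ℂ) • (ρG h : V →ₗ[ℂ] V) :=
  stmt7_general Q V ρ hirr ρG hcomp g h hgh
end

section
/- Let G be a finite group such that every ℂˣ-valued 2-cocycle on G (trivial action) is a 2-coboundary. Then a representation ρ : Conj(G) → GL(V) of the quandle Conj(G) over ℂ is irreducible if and only if there exist an irreducible group representation ρ' : G → GL(V) and a map χ : G → ℂˣ with χ(g h g⁻¹) = χ(h) for all g,h ∈ G, such that ρ(g) = χ(g) ρ'(g) for all g ∈ G. -/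
/-!
Schur's lemma holds for irreducible families of operators on a complex vector space of countable
dimension (Dixmier's argument: otherwise the resolvents `(T - c)⁻¹ v`, `c ∈ ℂ`, would be
uncountably many linearly independent vectors). Since `ρ` respects conjugation,
`ρ g ρ h ρ(gh)⁻¹` commutes with every `ρ k`, so it is a scalar `α(g, h)`; associativity makes `α`
a 2-cocycle. Writing `α = δβ`, the map `g ↦ β(g)⁻¹ ρ(g)` is a group homomorphism, and comparing
scalars in `ρ(ghg⁻¹) = ρ(g) ρ(h) ρ(g)⁻¹` shows that `β` is a class function. Rescaling by nonzero
scalars does not change invariant subspaces.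
-/

open scoped Quandles
section ProjectiveRepresentation

variable {G H A : Type*} [Group G] [Group H] [CommGroup A]

theorem commute_mul_mul_inv_of_map_conj {ρ : G → H}
    (hρ : ∀ g h : G, ρ (g * h * g⁻¹) = ρ g * ρ h * (ρ g)⁻¹) (g h k : G) :
    Commute (ρ g * ρ h * (ρ (g * h))⁻¹) (ρ k) := by
  have hconj_inv : ∀ x y : G, (ρ x)⁻¹ * ρ y * ρ x = ρ (x⁻¹ * y * x) := fun x y => by
    have h := hρ x (x⁻¹ * y * x)
    rw [show x * (x⁻¹ * y * x) * x⁻¹ = y by group] at h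
    rw [h]
    group
  rw [Commute, SemiconjBy, ← mul_inv_eq_iff_eq_mul]
  calc ρ g * ρ h * (ρ (g * h))⁻¹ * ρ k * (ρ g * ρ h * (ρ (g * h))⁻¹)⁻¹
      = ρ g * (ρ h * ((ρ (g * h))⁻¹ * ρ k * ρ (g * h)) * (ρ h)⁻¹) * (ρ g)⁻¹ := by group
    _ = ρ (g * (h * ((g * h)⁻¹ * k * (g * h)) * h⁻¹) * g⁻¹) := by rw [hconj_inv, ← hρ, ← hρ]
    _ = ρ k := by group

variable {u : A →* H} (hu : ∀ a x, Commute (u a) x)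
include hu

theorem cocycle_condition_of_mul_mul_inv_eq (hinj : Function.Injective u) {ρ : G → H}
    {α : G → G → A} (hα : ∀ g h, ρ g * ρ h * (ρ (g * h))⁻¹ = u (α g h)) (g h k : G) :
    α g h * α (g * h) k = α h k * α g (h * k) := by
  have hmul : ∀ g h, ρ g * ρ h = u (α g h) * ρ (g * h) := fun g h => by
    rw [← hα, inv_mul_cancel_right]
  apply hinj
  apply mul_right_cancel (b := ρ (g * h * k))
  calc u (α g h * α (g * h) k) * ρ (g * h * k) = ρ g * ρ h * ρ k := by
        rw [map_mul, mul_assoc, ← hmul, ← mul_assoc, ← hmul]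
    _ = u (α h k * α g (h * k)) * ρ (g * h * k) := by
        rw [mul_assoc, hmul, ← mul_assoc, ← (hu _ _).eq, mul_assoc, hmul, ← mul_assoc, map_mul,
          mul_assoc g]

section Rescaling

variable {ρ : G → H} {β : G → A}
  (hβ : ∀ g h, ρ g * ρ h * (ρ (g * h))⁻¹ = u (β g * β h * (β (g * h))⁻¹))
include hβ

def rescaledHom : G →* H :=
  MonoidHom.mk' (fun g => (u (β g))⁻¹ * ρ g) fun g h => by
    calc (u (β (g * h)))⁻¹ * ρ (g * h)
        = u ((β g * β h)⁻¹ * (β g * β h * (β (g * h))⁻¹)) * ρ (g * h) := by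
          rw [inv_mul_cancel_left, map_inv]
      _ = (u (β g))⁻¹ * ((u (β h))⁻¹ * ρ g) * ρ h := by
          rw [map_mul, mul_assoc, ← hβ, inv_mul_cancel_right, mul_inv, map_mul, map_inv, map_inv]
          simp only [mul_assoc]
      _ = (u (β g))⁻¹ * ρ g * ((u (β h))⁻¹ * ρ h) := by
          rw [((hu (β h) (ρ g)).inv_left).eq]
          simp only [mul_assoc]

theorem eq_mul_rescaledHom (g : G) : ρ g = u (β g) * rescaledHom hu hβ g := by
  simp [rescaledHom]

end Rescaling

theorem conj_invariant_of_eq_mul (hinj : Function.Injective u) {ρ : G → H}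
    (hρ : ∀ g h : G, ρ (g * h * g⁻¹) = ρ g * ρ h * (ρ g)⁻¹) {β : G → A}
    {σ : G →* H} (hσ : ∀ g, ρ g = u (β g) * σ g) (g h : G) : β (g * h * g⁻¹) = β h := by
  apply hinj
  apply mul_right_cancel (b := σ (g * h * g⁻¹))
  calc u (β (g * h * g⁻¹)) * σ (g * h * g⁻¹) = ρ g * ρ h * (ρ g)⁻¹ := by rw [← hσ, hρ]
    _ = u (β g) * (σ g * u (β h)) * σ h * (σ g)⁻¹ * (u (β g))⁻¹ := by
        rw [hσ g, hσ h]
        group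
    _ = u (β g) * (u (β h) * (σ g * σ h * (σ g)⁻¹)) * (u (β g))⁻¹ := by
        rw [← (hu (β h) (σ g)).eq]
        group
    _ = u (β h) * σ (g * h * g⁻¹) := by
        rw [(hu _ _).mul_inv_cancel, map_mul, map_mul, map_inv]

end ProjectiveRepresentation

namespace Module.End

open Polynomial

universe u v

variable {K : Type u} {V : Type v} [Field K] [AddCommGroup V] [Module K V] {T : Module.End K V}

theorem injective_aeval_of_forall_injective_sub [IsAlgClosed K]
    (hT : ∀ c : K, Function.Injective ⇑(T - algebraMap K _ c)) {p : K[X]} (hp : p ≠ 0) :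
    Function.Injective ⇑(aeval T p) := by
  have hC : Function.Injective ⇑(aeval T (C p.leadingCoeff)) := by
    intro v w hvw
    simpa [Module.algebraMap_end_apply, leadingCoeff_ne_zero.mpr hp] using hvw
  have hprod : Function.Injective ⇑(aeval T (p.roots.map (X - C ·)).prod) := by
    refine Multiset.prod_induction (fun q : K[X] => Function.Injective ⇑(aeval T q)) _
      (fun q r hq hr => by rw [map_mul]; exact hq.comp hr) (fun _ _ h => by simpa using h) ?_
    simp only [Multiset.mem_map]
    rintro _ ⟨a, -, rfl⟩
    simpa using hT a
  rw [(IsAlgClosed.splits p).eq_prod_roots, map_mul]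
  exact hC.comp hprod

theorem linearIndependent_resolvent_apply {U : K → (Module.End K V)ˣ}
    (hU : ∀ c, (U c : Module.End K V) = T - algebraMap K _ c)
    (hinj : ∀ p : K[X], p ≠ 0 → Function.Injective ⇑(aeval T p)) {v : V} (hv : v ≠ 0) :
    LinearIndependent K fun c => (↑(U c)⁻¹ : Module.End K V) v := by
  classical
  refine linearIndependent_iff'.2 fun s m hm i hi => ?_
  have hcancel : ∀ c ∈ s, aeval T (∏ j ∈ s, (X - C j)) ((↑(U c)⁻¹ : Module.End K V) v) =
      aeval T (∏ j ∈ s.erase c, (X - C j)) v := fun c hc => by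
    rw [← s.prod_erase_mul _ hc, map_mul, Module.End.mul_apply, map_sub, aeval_X, aeval_C, ← hU,
      ← Module.End.mul_apply (U c : Module.End K V), Units.mul_inv, Module.End.one_apply]
  set P : K[X] := ∑ c ∈ s, C (m c) * ∏ j ∈ s.erase c, (X - C j)
  have hP : aeval T P v = 0 := by
    have := congrArg (aeval T (∏ j ∈ s, (X - C j))) hm
    rw [map_sum, map_zero, Finset.sum_congr rfl fun c hc => by rw [map_smul, hcancel c hc]] at this
    simpa [P, map_sum, LinearMap.sum_apply, Module.End.mul_apply, Module.algebraMap_end_apply]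
      using this
  have hP0 : P = 0 := by
    by_contra h
    exact hv (hinj P h (by rw [hP, map_zero]))
  have hPi := congrArg (eval i) hP0
  rw [eval_zero, eval_finsetSum, Finset.sum_eq_single i] at hPi
  · rw [eval_mul, eval_C, eval_prod] at hPi
    refine (mul_eq_zero.mp hPi).resolve_right (Finset.prod_ne_zero_iff.mpr fun j hj => ?_)
    simpa [sub_eq_zero] using (Finset.ne_of_mem_erase hj).symm
  · intro c hc hci
    rw [eval_mul, eval_prod]
    exact mul_eq_zero_of_right _
      (Finset.prod_eq_zero (Finset.mem_erase.mpr ⟨Ne.symm hci, hi⟩) (by simp))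
  · exact fun h => absurd hi h

open Cardinal in
theorem exists_eq_algebraMap_of_rank_lt_card [IsAlgClosed K]
    (hV : lift.{u} (Module.rank K V) < lift.{v} #K)
    (hT : ∀ c : K, T - algebraMap K _ c ≠ 0 → Function.Bijective ⇑(T - algebraMap K _ c)) :
    ∃ c : K, T = algebraMap K _ c := by
  by_contra! hne
  have hbij : ∀ c : K, Function.Bijective ⇑(T - algebraMap K _ c) :=
    fun c => hT c (sub_ne_zero.mpr (hne c))
  obtain ⟨v, hv⟩ : ∃ v : V, v ≠ 0 := by
    by_contra! h
    exact hne 0 (LinearMap.ext fun v => by simp [h])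
  have hli := linearIndependent_resolvent_apply
    (U := fun c => ((Module.End.isUnit_iff _).mpr (hbij c)).unit) (fun c => rfl)
    (fun p hp => injective_aeval_of_forall_injective_sub (fun c => (hbij c).1) hp) hv
  exact hli.cardinal_lift_le_rank.not_gt hV

end Module.End

section Schur

open Cardinal

variable {ι V : Type*} [AddCommGroup V] [Module ℂ V] {ρ : ι → (V →ₗ[ℂ] V)ˣ}

theorem QdlIrred.bijective_of_commute (hρ : QdlIrred ρ) {L : V →ₗ[ℂ] V}
    (hL : ∀ i, Commute (ρ i : V →ₗ[ℂ] V) L) (hL₀ : L ≠ 0) : Function.Bijective L := by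
  refine ⟨LinearMap.ker_eq_bot.mp ?_, LinearMap.range_eq_top.mp ?_⟩
  · refine (hρ _ fun i v hv => ?_).resolve_right fun h => hL₀ (LinearMap.ker_eq_top.mp h)
    rw [LinearMap.mem_ker] at hv ⊢
    rw [← Module.End.mul_apply, ← (hL i).eq, Module.End.mul_apply, hv, map_zero]
  · refine (hρ _ fun i v hv => ?_).resolve_left fun h => hL₀ (LinearMap.range_eq_bot.mp h)
    obtain ⟨w, rfl⟩ := hv
    exact ⟨(ρ i : V →ₗ[ℂ] V) w, by rw [← Module.End.mul_apply, ← (hL i).eq, Module.End.mul_apply]⟩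

theorem QdlIrred.rank_le_aleph0 [Countable ι] (hρ : QdlIrred ρ) : Module.rank ℂ V ≤ ℵ₀ := by
  rcases subsingleton_or_nontrivial V with hV | hV
  · simp
  obtain ⟨v, hv⟩ := exists_ne (0 : V)
  let orbit : List ι → V := fun l => (l.map fun i => (ρ i : V →ₗ[ℂ] V)).prod v
  have hspan : Submodule.span ℂ (Set.range orbit) = ⊤ := by
    refine (hρ _ fun i w hw => ?_).resolve_left fun h => hv ?_
    · have hle : Submodule.span ℂ (Set.range orbit) ≤
          (Submodule.span ℂ (Set.range orbit)).comap (ρ i : V →ₗ[ℂ] V) := by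
        rw [Submodule.span_le]
        rintro _ ⟨l, rfl⟩
        exact Submodule.subset_span ⟨i :: l, by simp [orbit]⟩
      exact hle hw
    · have hv_mem : orbit [] ∈ Submodule.span ℂ (Set.range orbit) :=
        Submodule.subset_span (Set.mem_range_self [])
      simpa [h, orbit] using hv_mem
  calc Module.rank ℂ V = Module.rank ℂ (⊤ : Submodule ℂ V) := (rank_top ℂ V).symm
    _ ≤ #(Set.range orbit) := hspan ▸ rank_span_le _
    _ ≤ ℵ₀ := (Set.countable_range orbit).le_aleph0

theorem QdlIrred.exists_eq_algebraMap [Countable ι] (hρ : QdlIrred ρ) {L : V →ₗ[ℂ] V}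
    (hL : ∀ i, Commute (ρ i : V →ₗ[ℂ] V) L) : ∃ c : ℂ, L = algebraMap ℂ _ c := by
  have hV : lift.{0} (Module.rank ℂ V) < lift #ℂ := by
    rw [mk_complex, lift_continuum]
    exact (lift_le_aleph0.mpr hρ.rank_le_aleph0).trans_lt aleph0_lt_continuum
  exact Module.End.exists_eq_algebraMap_of_rank_lt_card hV fun c hc =>
    hρ.bijective_of_commute (fun i => (hL i).sub_right (Algebra.commute_algebraMap_right c _)) hc

variable (V) in
abbrev scalarUnits : ℂˣ →* (V →ₗ[ℂ] V)ˣ :=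
  Units.map (algebraMap ℂ (V →ₗ[ℂ] V) : ℂ →* V →ₗ[ℂ] V)

theorem scalarUnits_commute (a : ℂˣ) (T : (V →ₗ[ℂ] V)ˣ) : Commute (scalarUnits V a) T :=
  Commute.units_of_val (Algebra.commute_algebraMap_left _ _)

theorem scalarUnits_injective [Nontrivial V] : Function.Injective (scalarUnits V) :=
  fun _ _ h => Units.ext ((algebraMap ℂ (V →ₗ[ℂ] V)).injective (congrArg Units.val h))

theorem QdlIrred.exists_eq_scalarUnits [Countable ι] [Nontrivial V] (hρ : QdlIrred ρ)
    {T : (V →ₗ[ℂ] V)ˣ} (hT : ∀ i, Commute (ρ i) T) : ∃ a : ℂˣ, T = scalarUnits V a := by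
  obtain ⟨c, hc⟩ := hρ.exists_eq_algebraMap fun i => (hT i).units_val
  have hc₀ : c ≠ 0 := by
    rintro rfl
    exact T.ne_zero (by rw [hc, map_zero])
  exact ⟨Units.mk0 c hc₀, Units.ext hc⟩

theorem qdlIrred_iff_of_eq_smul {σ : ι → (V →ₗ[ℂ] V)ˣ} (χ : ι → ℂˣ)
    (h : ∀ i, (ρ i : V →ₗ[ℂ] V) = (χ i : ℂ) • (σ i : V →ₗ[ℂ] V)) : QdlIrred ρ ↔ QdlIrred σ := by
  refine forall_congr' fun W => imp_congr_left (forall₂_congr fun i v => ?_)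
  simp only [h, LinearMap.smul_apply, Submodule.smul_mem_iff _ (χ i).ne_zero]

end Schur

/-- if `G` is a finite group all of whose `ℂˣ`-valued 2-cocycles are
2-coboundaries, then a representation of the quandle `Conj(G)` is irreducible iff it is
the product of a conjugation-invariant `ℂˣ`-valued function and an irreducible linear
representation of `G`. -/
theorem stmt9 (G : Type*) [Group G] [Finite G]
    (hschur : ∀ α : G → G → ℂˣ,
      (∀ g h k : G, α g h * α (g * h) k = α h k * α g (h * k)) →
      ∃ β : G → ℂˣ, ∀ g h : G, α g h = β g * β h * (β (g * h))⁻¹)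
    (V : Type*) [AddCommGroup V] [Module ℂ V]
    (ρ : G → (V →ₗ[ℂ] V)ˣ) (hρ : ∀ g h : G, ρ (g * h * g⁻¹) = ρ g * ρ h * (ρ g)⁻¹) :
    QdlIrred ρ ↔
      ∃ (ρ' : G →* (V →ₗ[ℂ] V)ˣ) (χ : G → ℂˣ), GrpIrred ρ' ∧
        (∀ g h : G, χ (g * h * g⁻¹) = χ h) ∧
        ∀ g : G, (ρ g : V →ₗ[ℂ] V) = (χ g : ℂ) • (ρ' g : V →ₗ[ℂ] V) := by
  refine ⟨fun hirr => ?_, fun ⟨ρ', χ, hirr', _, hρρ'⟩ => (qdlIrred_iff_of_eq_smul χ hρρ').mpr hirr'⟩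
  rcases subsingleton_or_nontrivial V with hV | hV
  · exact ⟨1, 1, fun W _ => Or.inl (Subsingleton.elim _ _), fun _ _ => rfl,
      fun _ => Subsingleton.elim _ _⟩
  have hdefect : ∀ g h, ∃ a : ℂˣ, ρ g * ρ h * (ρ (g * h))⁻¹ = scalarUnits V a := fun g h =>
    hirr.exists_eq_scalarUnits fun k => (commute_mul_mul_inv_of_map_conj hρ g h k).symm
  choose α hα using hdefect
  obtain ⟨β, hβ⟩ := hschur α
    (cocycle_condition_of_mul_mul_inv_eq scalarUnits_commute scalarUnits_injective hα)
  have hcob : ∀ g h, ρ g * ρ h * (ρ (g * h))⁻¹ = scalarUnits V (β g * β h * (β (g * h))⁻¹) :=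
    fun g h => hβ g h ▸ hα g h
  set ρ' := rescaledHom scalarUnits_commute hcob
  have hρρ' : ∀ g, ρ g = scalarUnits V (β g) * ρ' g := eq_mul_rescaledHom scalarUnits_commute hcob
  have hsmul : ∀ g, (ρ g : V →ₗ[ℂ] V) = (β g : ℂ) • (ρ' g : V →ₗ[ℂ] V) := fun g => by
    rw [hρρ' g, Units.val_mul, Units.coe_map, Algebra.smul_def]
    rfl
  exact ⟨ρ', β, (qdlIrred_iff_of_eq_smul β hsmul).mp hirr,
    conj_invariant_of_eq_mul scalarUnits_commute scalarUnits_injective hρ hρρ', hsmul⟩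
end

section
/- For every finite quandle Q, the commutator subgroup of the enveloping group G(Q) is finite. -/
/-!
Every element of the kernel of the action `G(Q) → Sym(Q)` commutes with the generators
`x ∈ Q` (conjugating `x` by `g` gives `g • x`), hence is central. For finite `Q` the center
therefore has finite index; a commutator only depends on its arguments modulo the center, so
there are finitely many commutators, and Schur's theorem makes the commutator subgroup finite.
-/

open scoped Quandles
open scoped commutatorElement

section CenterFiniteIndex

variable {G : Type*} [Group G]

theorem commutatorElement_mul_of_mem_center {z w : G} (hz : z ∈ Subgroup.center G)
    (hw : w ∈ Subgroup.center G) (g h : G) : ⁅g * z, h * w⁆ = ⁅g, h⁆ := by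
  have hz' := Subgroup.mem_center_iff.mp hz
  have hw' := Subgroup.mem_center_iff.mp hw
  calc ⁅g * z, h * w⁆ = g * (z * (h * w)) * z⁻¹ * g⁻¹ * w⁻¹ * h⁻¹ := by group
    _ = g * h * (w * g⁻¹) * w⁻¹ * h⁻¹ := by rw [← hz' (h * w)]; group
    _ = ⁅g, h⁆ := by rw [← hw' g⁻¹]; group

theorem finite_commutatorSet_of_finiteIndex_center [(Subgroup.center G).FiniteIndex] :
    Finite (commutatorSet G) := by
  have hsub : commutatorSet G ⊆ Set.range
      fun p : (G ⧸ Subgroup.center G) × (G ⧸ Subgroup.center G) => ⁅p.1.out, p.2.out⁆ := by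
    rintro _ ⟨g, h, rfl⟩
    obtain ⟨z, hz⟩ := QuotientGroup.mk_out_eq_mul (Subgroup.center G) g
    obtain ⟨w, hw⟩ := QuotientGroup.mk_out_eq_mul (Subgroup.center G) h
    exact ⟨(g, h), by simp only [hz, hw, commutatorElement_mul_of_mem_center z.2 w.2]⟩
  exact ((Set.finite_range _).subset hsub).to_subtype

end CenterFiniteIndex

namespace Rack.EnvelGroup

variable {R : Type*} [Rack R]

theorem closure_range_toEnvelGroup : Subgroup.closure (Set.range (toEnvelGroup R)) = ⊤ := by
  rw [eq_top_iff]
  rintro g -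
  induction g using Quotient.inductionOn with
  | h a =>
    induction a with
    | unit => exact one_mem _
    | incl x => exact Subgroup.subset_closure ⟨x, rfl⟩
    | mul a b iha ihb => exact mul_mem iha ihb
    | inv a iha => exact inv_mem iha

theorem toEnvelGroup_inv_mul_mul (x y : R) :
    (toEnvelGroup R x)⁻¹ * toEnvelGroup R y * toEnvelGroup R x = toEnvelGroup R (x ◃⁻¹ y) := by
  have h : toEnvelGroup R y =
      toEnvelGroup R x * toEnvelGroup R (x ◃⁻¹ y) * (toEnvelGroup R x)⁻¹ := by
    conv_lhs => rw [← act_invAct_eq x y]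
    exact (toEnvelGroup R).map_act
  rw [h]
  group

theorem mul_toEnvelGroup_mul_inv (g : EnvelGroup R) (y : R) :
    g * toEnvelGroup R y * g⁻¹ = toEnvelGroup R (envelAction g y) := by
  have hg : g ∈ Subgroup.closure (Set.range (toEnvelGroup R)) := by
    rw [closure_range_toEnvelGroup]; trivial
  induction hg using Subgroup.closure_induction'' generalizing y with
  | mem _ hx =>
    obtain ⟨x, rfl⟩ := hx
    exact ((toEnvelGroup R).map_act).symm
  | inv_mem _ hx =>
    obtain ⟨x, rfl⟩ := hx
    rw [inv_inv, toEnvelGroup_inv_mul_mul, map_inv]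
    rfl
  | one => simp
  | mul a b _ _ iha ihb =>
    rw [map_mul, Equiv.Perm.mul_apply, ← iha, ← ihb]
    group

theorem ker_envelAction_le_center : envelAction.ker ≤ Subgroup.center (EnvelGroup R) := by
  intro g hg
  rw [← Subgroup.centralizer_univ, ← Subgroup.coe_top, ← closure_range_toEnvelGroup,
    Subgroup.centralizer_closure]
  rintro _ ⟨y, rfl⟩
  have h := mul_toEnvelGroup_mul_inv g y
  rw [MonoidHom.mem_ker.mp hg, Equiv.Perm.one_apply] at h
  exact (mul_inv_eq_iff_eq_mul.mp h).symm

theorem finiteIndex_center [Finite R] : (Subgroup.center (EnvelGroup R)).FiniteIndex :=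
  Subgroup.finiteIndex_of_le ker_envelAction_le_center

end Rack.EnvelGroup

/-- for a finite quandle `Q`, the commutator subgroup of `G(Q)` is finite. -/
theorem stmt13 (Q : Type*) [Quandle Q] [Finite Q] :
    Finite (commutator (Rack.EnvelGroup Q)) := by
  have := Rack.EnvelGroup.finiteIndex_center (R := Q)
  have := finite_commutatorSet_of_finiteIndex_center (G := Rack.EnvelGroup Q)
  -- Schur's theorem
  infer_instance
end
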